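/- Let d > 0, let m ∈ ℝⁿ, and let c ∈ [0, 1]. Then the function f : ℝⁿ → ℝ given by f(x) = ‖x‖²/(4d²) − c·exp(−‖x − m‖²/(2d²)) is convex on ℝⁿ. -/

import Mathlib

/-! Up to the affine function `(‖x‖² - ‖x - m‖²)/(4d²)`, the function is the profile
`φ(r) = r²/4 - c·exp(-r²/2)` evaluated at `‖x - m‖/|d|`. Its second derivative is
`φ''(r) = 1/2 - c(r² - 1)exp(-r²/2)`, and `(s - 1)exp(-s/2) ≤ 2exp(-3/2) < 1/2`, so `φ` is convex;
it is nondecreasing on `[0, ∞)`, so composing it with the convex nonnegative function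
`x ↦ ‖x - m‖/|d|` gives a convex function. -/

open Real Set

section Composition

variable {𝕜 E α β : Type*} [Semiring 𝕜] [PartialOrder 𝕜] [AddCommMonoid E]
  [AddCommMonoid α] [PartialOrder α] [AddCommMonoid β] [PartialOrder β]
  [SMul 𝕜 E] [SMul 𝕜 α] [SMul 𝕜 β] {s : Set E} {t : Set β} {f : E → β} {g : β → α}

theorem ConvexOn.comp_of_mapsTo (hg : ConvexOn 𝕜 t g) (hf : ConvexOn 𝕜 s f)
    (hfst : MapsTo f s t) (hg' : MonotoneOn g t) : ConvexOn 𝕜 s (g ∘ f) :=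
  ⟨hf.1, fun _ hx _ hy _ _ ha hb hab =>
    (hg' (hfst <| hf.1 hx hy ha hb hab) (hg.1 (hfst hx) (hfst hy) ha hb hab) <|
      hf.2 hx hy ha hb hab).trans <| hg.2 (hfst hx) (hfst hy) ha hb hab⟩

end Composition

/-- The tangent line of `exp` at `3/2`, where `(s - 1)exp(-s/2)` is maximal (`s = 3`). -/
theorem Real.sub_one_mul_exp_neg_half_le (s : ℝ) :
    (s - 1) * exp (-s / 2) ≤ 2 * exp (-(3 / 2)) := by
  have htangent := add_one_le_exp (s / 2 - 3 / 2)
  calc (s - 1) * exp (-s / 2) = 2 * (s / 2 - 3 / 2 + 1) * exp (-s / 2) := by ring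
    _ ≤ 2 * exp (s / 2 - 3 / 2) * exp (-s / 2) := by gcongr
    _ = 2 * exp (-(3 / 2)) := by rw [mul_assoc, ← exp_add]; ring_nf

theorem Real.exp_neg_three_halves_lt : exp (-(3 / 2)) < 1 / 4 := by
  have hlog : log 4 < 3 / 2 := by
    rw [show (4 : ℝ) = 2 ^ 2 by norm_num, log_pow]
    linarith [log_two_lt_d9]
  rw [exp_neg, one_div]
  exact inv_strictAnti₀ (by norm_num) ((log_lt_iff_lt_exp (by norm_num)).1 hlog)

theorem convexOn_sq_div_four_sub_mul_exp {c : ℝ} (hc₀ : 0 ≤ c) (hc₁ : c ≤ 1) :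
    ConvexOn ℝ univ fun r : ℝ => r ^ 2 / 4 - c * exp (-r ^ 2 / 2) := by
  have hsq (r : ℝ) : HasDerivAt (fun r : ℝ => r ^ 2) (2 * r) r := by
    simpa using hasDerivAt_pow 2 r
  have hgauss (r : ℝ) :
      HasDerivAt (fun r : ℝ => exp (-r ^ 2 / 2)) (-r * exp (-r ^ 2 / 2)) r :=
    ((hsq r).fun_neg.div_const 2).exp.congr_deriv (by ring)
  have hf' (r : ℝ) : HasDerivAt (fun r : ℝ => r ^ 2 / 4 - c * exp (-r ^ 2 / 2))
      (r / 2 + c * r * exp (-r ^ 2 / 2)) r :=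
    (((hsq r).div_const 4).sub ((hgauss r).const_mul c)).congr_deriv (by ring)
  have hf'' (r : ℝ) : HasDerivAt (fun r : ℝ => r / 2 + c * r * exp (-r ^ 2 / 2))
      (1 / 2 - c * (r ^ 2 - 1) * exp (-r ^ 2 / 2)) r :=
    (((hasDerivAt_id r).div_const 2).add
      (((hasDerivAt_id r).const_mul c).mul (hgauss r))).congr_deriv (by simp only [id]; ring)
  refine convexOn_of_hasDerivWithinAt2_nonneg convex_univ
    (fun r _ => (hf' r).continuousAt.continuousWithinAt)
    (fun r _ => (hf' r).hasDerivWithinAt) (fun r _ => (hf'' r).hasDerivWithinAt) fun r _ => ?_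
  have hbound : (r ^ 2 - 1) * exp (-r ^ 2 / 2) ≤ 1 / 2 :=
    (sub_one_mul_exp_neg_half_le (r ^ 2)).trans (by linarith [exp_neg_three_halves_lt])
  nlinarith [mul_nonneg hc₀ (sub_nonneg.2 hbound)]

theorem monotoneOn_sq_div_four_sub_mul_exp {c : ℝ} (hc₀ : 0 ≤ c) :
    MonotoneOn (fun r : ℝ => r ^ 2 / 4 - c * exp (-r ^ 2 / 2)) (Ici 0) := by
  intro a (ha : 0 ≤ a) b _ hab
  dsimp only
  gcongr

theorem convexOn_norm_sq_sub_norm_sub_sq {E : Type*} [NormedAddCommGroup E]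
    [InnerProductSpace ℝ E] (m : E) : ConvexOn ℝ univ fun x : E => ‖x‖ ^ 2 - ‖x - m‖ ^ 2 :=
  (((2 : ℝ) • innerₛₗ ℝ m).convexOn convex_univ).add_const (-‖m‖ ^ 2) |>.congr fun x _ => by
    simp only [LinearMap.coe_smul, coe_innerₛₗ_apply, Pi.add_apply, Pi.smul_apply, smul_eq_mul,
      norm_sub_sq_real, real_inner_comm]
    ring

theorem convexOn_norm_sq_div_sub_mul_exp_neg_norm_sub_sq {E : Type*} [NormedAddCommGroup E]
    [InnerProductSpace ℝ E] (m : E) (d : ℝ) {c : ℝ} (hc₀ : 0 ≤ c) (hc₁ : c ≤ 1) :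
    ConvexOn ℝ univ fun x : E => ‖x‖ ^ 2 / (4 * d ^ 2) - c * exp (-‖x - m‖ ^ 2 / (2 * d ^ 2)) := by
  have hd : 0 ≤ |d|⁻¹ := inv_nonneg.2 (abs_nonneg d)
  have hφ := (convexOn_sq_div_four_sub_mul_exp hc₀ hc₁).subset (subset_univ _) (convex_Ici 0)
  have hprofile := hφ.comp_of_mapsTo ((convexOn_dist m convex_univ).smul hd)
    (fun x _ => smul_nonneg hd dist_nonneg) (monotoneOn_sq_div_four_sub_mul_exp hc₀)
  have haffine := (convexOn_norm_sq_sub_norm_sub_sq m).smul (c := (4 * d ^ 2)⁻¹) (by positivity)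
  refine (hprofile.add haffine).congr fun x _ => ?_
  simp only [Function.comp_apply, Pi.add_apply, smul_eq_mul, dist_eq_norm, mul_pow, inv_pow, sq_abs]
  ring_nf

theorem quadratic_minus_gaussian_convex_general (n : ℕ) (d : ℝ)
    (m : EuclideanSpace ℝ (Fin n)) (c : ℝ) (hc : c ∈ Set.Icc (0 : ℝ) 1) :
    ConvexOn ℝ Set.univ (fun x : EuclideanSpace ℝ (Fin n) =>
      ‖x‖ ^ 2 / (4 * d ^ 2) - c * Real.exp (-‖x - m‖ ^ 2 / (2 * d ^ 2))) :=
  convexOn_norm_sq_div_sub_mul_exp_neg_norm_sub_sq m d hc.1 hc.2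

/-- For `d > 0`, `m ∈ ℝⁿ` and `c ∈ [0, 1]`, the function
`f(x) = ‖x‖²/(4d²) − c·exp(−‖x − m‖²/(2d²))` is convex on `ℝⁿ`. -/
theorem quadratic_minus_gaussian_convex (n : ℕ) (d : ℝ) (hd : 0 < d)
    (m : EuclideanSpace ℝ (Fin n)) (c : ℝ) (hc : c ∈ Set.Icc (0 : ℝ) 1) :
    ConvexOn ℝ Set.univ (fun x : EuclideanSpace ℝ (Fin n) =>
      ‖x‖ ^ 2 / (4 * d ^ 2) - c * Real.exp (-‖x - m‖ ^ 2 / (2 * d ^ 2))) :=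
  quadratic_minus_gaussian_convex_general n d m c hc
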